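/- Let q be an odd prime power and γ ∈ GF(q²)\{0} with γ² ≠ γ̄². Set κ = (γ/γ̄ + γ̄/γ)² and s = γ/γ̄ + γ̄/γ (a square root of κ in GF(q)). Then: s + 2 = (γ+γ̄)²/(γγ̄) is a square in GF(q) if and only if γγ̄ is a square in GF(q) (equivalently, γ is a square in GF(q²)); and −s + 2 = (γ−γ̄)²/(−γγ̄) is a square in GF(q) if and only if −γγ̄ is a nonsquare in GF(q). -/

import Mathlib

/-!
Conjugation `x ↦ x ^ q` of `GF(q²)` fixes `γ + γ̄` and `γγ̄` and negates `γ - γ̄`. Hence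
`y ↦ (γ + γ̄) / y` matches square roots in `GF(q)` of `s + 2 = (γ + γ̄)² / (γγ̄)` with those
of `γγ̄`. Every `c ∈ GF(q)` is a square in `GF(q²)`, and a square root `w` of it has `w̄ = ±w`;
for `c = -γγ̄` the root is fixed exactly when `c` is a square in `GF(q)`, and otherwise
`(γ - γ̄) / w` is a square root of `-s + 2` in `GF(q)`. Finally, by Euler's criterion `γ` is a
square iff `γ ^ ((q² - 1) / 2) = (γγ̄) ^ ((q - 1) / 2) = 1`, i.e. iff `γγ̄` is a square in `GF(q)`.
-/

section

variable {K : Type*} [Field K] {q : ℕ}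

/-- `c` is a square in the fixed field `GF(q)` of `x ↦ x ^ q`. -/
def IsSquareInFixedField (q : ℕ) (c : K) : Prop :=
  ∃ y : K, y ^ q = y ∧ y ^ 2 = c

theorem pow_sub_one_eq_one_of_pow_eq_self {y : K} (hy0 : y ≠ 0) (hy : y ^ q = y) :
    y ^ (q - 1) = 1 := by
  cases q with
  | zero => simp
  | succ n => exact mul_right_cancel₀ hy0 (by rwa [one_mul, Nat.add_sub_cancel, ← pow_succ])

theorem pow_eq_self_or_neg_of_sq_eq {w c : K} (hc : c ^ q = c) (hw : w ^ 2 = c) :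
    w ^ q = w ∨ w ^ q = -w :=
  sq_eq_sq_iff_eq_or_eq_neg.1 (by rw [← pow_right_comm, hw, hc])

theorem isSquareInFixedField_sq_div_iff {a c : K} (ha : a ^ q = a) (ha0 : a ≠ 0) :
    IsSquareInFixedField q (a ^ 2 / c) ↔ IsSquareInFixedField q c := by
  constructor
  · rintro ⟨y, hy, hyc⟩
    refine ⟨a / y, by rw [div_pow, ha, hy], ?_⟩
    rw [div_pow, hyc, div_div_cancel₀ (pow_ne_zero 2 ha0)]
  · rintro ⟨y, hy, hyc⟩
    exact ⟨a / y, by rw [div_pow, ha, hy], by rw [div_pow, hyc]⟩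

theorem not_isSquareInFixedField_of_sq_eq (hq : Odd q) (h2 : (2 : K) ≠ 0) {w c : K}
    (hw0 : w ≠ 0) (hw : w ^ q = -w) (hwc : w ^ 2 = c) : ¬ IsSquareInFixedField q c := by
  rintro ⟨u, hu, huc⟩
  have hwq : w ^ q = w := by
    rcases sq_eq_sq_iff_eq_or_eq_neg.1 (huc.trans hwc.symm) with rfl | rfl
    · exact hu
    · rwa [hq.neg_pow, neg_inj] at hu
  have h2w : 2 * w = 0 := by linear_combination hw - hwq
  exact hw0 ((mul_eq_zero.1 h2w).resolve_left h2)

section Finite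

variable [Fintype K]

theorem exists_eq_ringChar_pow_of_card_eq_sq (hK : Fintype.card K = q ^ 2) :
    ∃ n, q = ringChar K ^ n := by
  obtain ⟨n, hp, hn⟩ := FiniteField.card K (ringChar K)
  obtain ⟨k, -, hk⟩ := (Nat.dvd_prime_pow hp).1 (hn ▸ hK ▸ dvd_pow_self q two_ne_zero)
  exact ⟨k, hk⟩

theorem add_pow_of_card_eq_sq (hK : Fintype.card K = q ^ 2) (x y : K) :
    (x + y) ^ q = x ^ q + y ^ q := by
  obtain ⟨n, rfl⟩ := exists_eq_ringChar_pow_of_card_eq_sq hK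
  have := Fact.mk (CharP.char_is_prime K (ringChar K))
  exact add_pow_char_pow x y _ _

theorem sub_pow_of_card_eq_sq (hK : Fintype.card K = q ^ 2) (x y : K) :
    (x - y) ^ q = x ^ q - y ^ q := by
  obtain ⟨n, rfl⟩ := exists_eq_ringChar_pow_of_card_eq_sq hK
  have := Fact.mk (CharP.char_is_prime K (ringChar K))
  exact sub_pow_char_pow x y _

theorem pow_pow_of_card_eq_sq (hK : Fintype.card K = q ^ 2) (x : K) : (x ^ q) ^ q = x := by
  rw [← pow_mul, ← sq, ← hK, FiniteField.pow_card]

theorem ringChar_ne_two_of_card_eq_sq (hK : Fintype.card K = q ^ 2) (hq : Odd q) :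
    ringChar K ≠ 2 := by
  rw [Ne, FiniteField.even_card_iff_char_two, hK, ← Nat.even_iff, Nat.even_pow' two_ne_zero,
    Nat.not_even_iff_odd]
  exact hq

theorem isSquare_of_card_eq_sq_of_pow_eq_self (hK : Fintype.card K = q ^ 2) (hq : Odd q) {c : K}
    (hc : c ^ q = c) : IsSquare c := by
  rcases eq_or_ne c 0 with rfl | hc0
  · exact IsSquare.zero
  rw [FiniteField.isSquare_iff (ringChar_ne_two_of_card_eq_sq hK hq) hc0, hK]
  obtain ⟨j, rfl⟩ := hq
  have hexp : (2 * j + 1) ^ 2 / 2 = 2 * j * (j + 1) := by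
    have : (2 * j + 1) ^ 2 = 2 * (2 * j * (j + 1)) + 1 := by ring
    omega
  rw [hexp, pow_mul, ← Nat.add_sub_cancel (2 * j) 1, pow_sub_one_eq_one_of_pow_eq_self hc0 hc,
    one_pow]

theorem isSquare_iff_isSquareInFixedField_mul_pow (hK : Fintype.card K = q ^ 2) (hq : Odd q)
    {γ : K} (hγ : γ ≠ 0) : IsSquare γ ↔ IsSquareInFixedField q (γ * γ ^ q) := by
  constructor
  · rintro ⟨w, rfl⟩
    refine ⟨w * w ^ q, by rw [mul_pow, pow_pow_of_card_eq_sq hK, mul_comm], ?_⟩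
    rw [mul_pow, ← pow_right_comm]
    ring
  · rintro ⟨y, hy, hyγ⟩
    have hy0 : y ≠ 0 := by rintro rfl; simp [hγ] at hyγ
    rw [FiniteField.isSquare_iff (ringChar_ne_two_of_card_eq_sq hK hq) hγ, hK]
    obtain ⟨j, rfl⟩ := hq
    have hexp : (2 * j + 1) ^ 2 / 2 = (2 * j + 1 + 1) * j := by
      have : (2 * j + 1) ^ 2 = 2 * ((2 * j + 1 + 1) * j) + 1 := by ring
      omega
    calc γ ^ ((2 * j + 1) ^ 2 / 2) = (γ * γ ^ (2 * j + 1)) ^ j := by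
          rw [hexp, pow_mul, pow_succ' γ (2 * j + 1)]
      _ = y ^ (2 * j + 1 - 1) := by rw [← hyγ, ← pow_mul, Nat.add_sub_cancel]
      _ = 1 := pow_sub_one_eq_one_of_pow_eq_self hy0 hy

theorem isSquareInFixedField_sq_div_iff_not (hK : Fintype.card K = q ^ 2) (hq : Odd q)
    {d c : K} (hd : d ^ q = -d) (hd0 : d ≠ 0) (hc : c ^ q = c) (hc0 : c ≠ 0) :
    IsSquareInFixedField q (d ^ 2 / c) ↔ ¬ IsSquareInFixedField q c := by
  have h2 : (2 : K) ≠ 0 := Ring.two_ne_zero (ringChar_ne_two_of_card_eq_sq hK hq)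
  constructor
  · rintro ⟨y, hy, hyc⟩
    have hy0 : y ≠ 0 := by
      rintro rfl
      exact div_ne_zero (pow_ne_zero 2 hd0) hc0 (by rw [← hyc, zero_pow two_ne_zero])
    refine not_isSquareInFixedField_of_sq_eq hq h2 (div_ne_zero hd0 hy0) ?_ ?_
    · rw [div_pow, hd, hy, neg_div]
    · rw [div_pow, hyc, div_div_cancel₀ (pow_ne_zero 2 hd0)]
  · intro hnot
    obtain ⟨w, rfl⟩ := isSquare_of_card_eq_sq_of_pow_eq_self hK hq hc
    rcases pow_eq_self_or_neg_of_sq_eq hc (sq w) with hw | hw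
    · exact absurd ⟨w, hw, sq w⟩ hnot
    · exact ⟨d / w, by rw [div_pow, hd, hw, neg_div_neg_eq], by rw [div_pow, sq w]⟩

end Finite

end

theorem stmt_17_general (p m q : ℕ) (hp : p.Prime) (hp2 : p ≠ 2)
    (hq : q = p ^ m)
    (K : Type) [Field K] [Fintype K] (hK : Fintype.card K = q ^ 2)
    (γ : K) (hγ : γ ≠ 0) (hγ2 : γ ^ 2 ≠ (γ ^ q) ^ 2)
    (s : K) (hs : s = γ / γ ^ q + γ ^ q / γ) :
    s + 2 = (γ + γ ^ q) ^ 2 / (γ * γ ^ q) ∧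
    -s + 2 = (γ - γ ^ q) ^ 2 / (-(γ * γ ^ q)) ∧
    ((∃ y : K, y ^ q = y ∧ y ^ 2 = s + 2) ↔
      (∃ y : K, y ^ q = y ∧ y ^ 2 = γ * γ ^ q)) ∧
    ((∃ y : K, y ^ q = y ∧ y ^ 2 = s + 2) ↔ IsSquare γ) ∧
    ((∃ y : K, y ^ q = y ∧ y ^ 2 = -s + 2) ↔
      ¬ ∃ y : K, y ^ q = y ∧ y ^ 2 = -(γ * γ ^ q)) := by
  have hq_odd : Odd q := hq ▸ (hp.odd_of_ne_two hp2).pow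
  have hγq : γ ^ q ≠ 0 := pow_ne_zero q hγ
  have hadd : γ + γ ^ q ≠ 0 := fun h => hγ2 (by linear_combination (γ - γ ^ q) * h)
  have hsub : γ - γ ^ q ≠ 0 := fun h => hγ2 (by linear_combination (γ + γ ^ q) * h)
  have hsum : s + 2 = (γ + γ ^ q) ^ 2 / (γ * γ ^ q) := by rw [hs]; field_simp; ring
  have hdiff : -s + 2 = (γ - γ ^ q) ^ 2 / (-(γ * γ ^ q)) := by rw [hs]; field_simp; ring
  have hadd_fixed : (γ + γ ^ q) ^ q = γ + γ ^ q := by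
    rw [add_pow_of_card_eq_sq hK, pow_pow_of_card_eq_sq hK, add_comm]
  have hsub_anti : (γ - γ ^ q) ^ q = -(γ - γ ^ q) := by
    rw [sub_pow_of_card_eq_sq hK, pow_pow_of_card_eq_sq hK, neg_sub]
  have hnorm_fixed : (-(γ * γ ^ q)) ^ q = -(γ * γ ^ q) := by
    rw [hq_odd.neg_pow, mul_pow, pow_pow_of_card_eq_sq hK, mul_comm]
  have hsquare : IsSquareInFixedField q (s + 2) ↔ IsSquareInFixedField q (γ * γ ^ q) :=
    hsum ▸ isSquareInFixedField_sq_div_iff hadd_fixed hadd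
  refine ⟨hsum, hdiff, hsquare,
    hsquare.trans (isSquare_iff_isSquareInFixedField_mul_pow hK hq_odd hγ).symm, ?_⟩
  exact hdiff ▸ isSquareInFixedField_sq_div_iff_not hK hq_odd hsub_anti hsub hnorm_fixed
    (neg_ne_zero.2 (mul_ne_zero hγ hγq))

/-- With s = γ/γ̄ + γ̄/γ: s + 2 = (γ+γ̄)²/(γγ̄) and it is a square in GF(q)
iff γγ̄ is a square in GF(q), iff γ is a square in GF(q²); and
−s + 2 = (γ−γ̄)²/(−γγ̄) and it is a square in GF(q) iff −γγ̄ is a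
nonsquare in GF(q). -/
theorem stmt_17 (p m q : ℕ) (hp : p.Prime) (hp2 : p ≠ 2) (hm : m ≠ 0)
    (hq : q = p ^ m)
    (K : Type) [Field K] [Fintype K] (hK : Fintype.card K = q ^ 2)
    (γ : K) (hγ : γ ≠ 0) (hγ2 : γ ^ 2 ≠ (γ ^ q) ^ 2)
    (s : K) (hs : s = γ / γ ^ q + γ ^ q / γ) :
    s + 2 = (γ + γ ^ q) ^ 2 / (γ * γ ^ q) ∧
    -s + 2 = (γ - γ ^ q) ^ 2 / (-(γ * γ ^ q)) ∧
    ((∃ y : K, y ^ q = y ∧ y ^ 2 = s + 2) ↔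
      (∃ y : K, y ^ q = y ∧ y ^ 2 = γ * γ ^ q)) ∧
    ((∃ y : K, y ^ q = y ∧ y ^ 2 = s + 2) ↔ IsSquare γ) ∧
    ((∃ y : K, y ^ q = y ∧ y ^ 2 = -s + 2) ↔
      ¬ ∃ y : K, y ^ q = y ∧ y ^ 2 = -(γ * γ ^ q)) :=
  stmt_17_general p m q hp hp2 hq K hK γ hγ hγ2 s hs
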